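/- arXiv:1012.3201 — 7 statements merged into one kernel-verified Lean document; each statement's English description precedes it below -/
import Mathlib

section
/- Let W be an n×n circulant matrix over a field F with generator w = (w_0, ..., w_{n-1}), and suppose n = c·l with c, l > 1. Define the permutation π on {0,...,n-1} by listing the indices 0, c, 2c, ..., (l-1)c, then 1, c+1, ..., (l-1)c+1, etc. Then applying π simultaneously to the rows and columns of W yields a c×c block matrix whose (i,j) block is an l×l circulant; specifically, the (i,j) block equals the circulant Ψ(w_{j-i}) if j ≥ i and equals the one-step right cyclic shift Ψ^{(1)}(w_{c+j-i}) if j < i, where w_k = (w_k, w_{c+k}, ..., w_{(l-1)c+k}) is the k-th cyclic section of w. -/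
namespace Paper

variable {F : Type*} [Field F]

/-- Entry `(i,j)` of the `n×n` circulant `Ψ(w)` whose row `i` is the generator `w`
cyclically shifted `i` places to the right, i.e. the entry is `w ((j - i) mod n)`. -/
def psiEnt (n : ℕ) (w : ℕ → F) (i j : ℕ) : F := w ((j + n - i) % n)

/-- One-place right cyclic shift of a length-`n` generator. -/
def shift1 (n : ℕ) (w : ℕ → F) : ℕ → F := fun u => w ((u + n - 1) % n)

/-- The `k`-th cyclic section `w_k = (w_k, w_{c+k}, …, w_{(l-1)c+k})` of `w`. -/
def sect (c : ℕ) (w : ℕ → F) (k : ℕ) : ℕ → F := fun t => w (t * c + k)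

/-- The permutation `π` of `{0,…,cl-1}` listing `0, c, 2c, …, (l-1)c`, then
`1, c+1, …, (l-1)c+1`, etc.; the entry in position `i·l + t` is `t·c + i`. -/
def piPerm (c l : ℕ) (a : ℕ) : ℕ := (a % l) * c + a / l

lemma piPerm_eq (c l : ℕ) (hl : 0 < l) (i s : ℕ) (hs : s < l) :
    piPerm c l (i * l + s) = s * c + i := by
  unfold piPerm
  rw [Nat.add_comm (i * l) s, Nat.add_mul_mod_self_right, Nat.mod_eq_of_lt hs,
    Nat.add_mul_div_right _ _ hl, Nat.div_eq_of_lt hs, Nat.zero_add]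

/-- Applying `π` simultaneously to the rows and columns of the `n×n` circulant `Ψ(w)`
(`n = c·l`, `c,l > 1`) yields a `c×c` block matrix of `l×l` circulants: the `(i,j)` block
is `Ψ(w_{j-i})` if `j ≥ i`, and the one-step right cyclic shift `Ψ⁽¹⁾(w_{c+j-i})` if `j < i`. -/
theorem circulant_block_decomposition (c l : ℕ) (hc : 1 < c) (hl : 1 < l)
    (w : ℕ → F) (i j s t : ℕ) (hi : i < c) (hj : j < c) (hs : s < l) (ht : t < l) :
    psiEnt (c * l) w (piPerm c l (i * l + s)) (piPerm c l (j * l + t)) =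
      if i ≤ j then psiEnt l (sect c w (j - i)) s t
      else psiEnt l (shift1 l (sect c w (c + j - i))) s t := by
  rw [piPerm_eq c l (by omega) i s hs, piPerm_eq c l (by omega) j t ht]
  unfold psiEnt shift1 sect
  have hca : t * c + j < c * l := by
    have h1 : (t + 1) * c ≤ l * c := Nat.mul_le_mul_right c ht
    rw [Nat.add_mul, Nat.one_mul, Nat.mul_comm l c] at h1
    omega
  have hcb : s * c + i < c * l := by
    have h1 : (s + 1) * c ≤ l * c := Nat.mul_le_mul_right c hs
    rw [Nat.add_mul, Nat.one_mul, Nat.mul_comm l c] at h1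
    omega
  have hscl : s * c + c ≤ c * l := by
    have h1 : (s + 1) * c ≤ l * c := Nat.mul_le_mul_right c hs
    rw [Nat.add_mul, Nat.one_mul, Nat.mul_comm l c] at h1
    omega
  have htcl : t * c + c ≤ c * l := by
    have h1 : (t + 1) * c ≤ l * c := Nat.mul_le_mul_right c ht
    rw [Nat.add_mul, Nat.one_mul, Nat.mul_comm l c] at h1
    omega
  have hcl : c ≤ c * l := Nat.le_mul_of_pos_right c (by omega)
  by_cases hst : s ≤ t
  · have hm1 : s * c ≤ t * c := Nat.mul_le_mul_right c hst
    have hin : (t + l - s) % l = t - s := by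
      rw [show t + l - s = (t - s) + l by omega, Nat.add_mod_right]
      exact Nat.mod_eq_of_lt (by omega)
    by_cases hij : i ≤ j
    · rw [if_pos hij, hin]
      have hout : (t * c + j + c * l - (s * c + i)) % (c * l) = (t - s) * c + (j - i) := by
        rw [Nat.sub_mul,
          show t * c + j + c * l - (s * c + i) = (t * c - s * c + (j - i)) + c * l by omega,
          Nat.add_mod_right]
        exact Nat.mod_eq_of_lt (by omega)
      rw [hout, Nat.sub_mul]
    · rw [if_neg hij, hin]
      by_cases hst' : s < t
      · have hm2 : s * c + c ≤ t * c := by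
          have h1 : (s + 1) * c ≤ t * c := Nat.mul_le_mul_right c hst'
          rw [Nat.add_mul, Nat.one_mul] at h1; omega
        have hsh : (t - s + l - 1) % l = t - s - 1 := by
          rw [show t - s + l - 1 = (t - s - 1) + l by omega, Nat.add_mod_right]
          exact Nat.mod_eq_of_lt (by omega)
        have hout : (t * c + j + c * l - (s * c + i)) % (c * l)
            = (t - s - 1) * c + (c + j - i) := by
          rw [Nat.sub_mul, Nat.sub_mul, Nat.one_mul,
            show t * c + j + c * l - (s * c + i)
              = (t * c - s * c - c + (c + j - i)) + c * l by omega,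
            Nat.add_mod_right]
          exact Nat.mod_eq_of_lt (by omega)
        rw [hsh, hout]
      · have hteq : t = s := by omega
        subst hteq
        have hsh : (t - t + l - 1) % l = l - 1 := by
          rw [show t - t + l - 1 = l - 1 by omega]
          exact Nat.mod_eq_of_lt (by omega)
        have hout : (t * c + j + c * l - (t * c + i)) % (c * l)
            = (l - 1) * c + (c + j - i) := by
          rw [Nat.sub_mul, Nat.one_mul, Nat.mul_comm l c,
            show t * c + j + c * l - (t * c + i) = c * l - c + (c + j - i) by omega]
          exact Nat.mod_eq_of_lt (by omega)
        rw [hsh, hout]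
  · have hts : t < s := by omega
    have hm3 : t * c + c ≤ s * c := by
      have h1 : (t + 1) * c ≤ s * c := Nat.mul_le_mul_right c hts
      rw [Nat.add_mul, Nat.one_mul] at h1; omega
    have hin : (t + l - s) % l = t + l - s := Nat.mod_eq_of_lt (by omega)
    by_cases hij : i ≤ j
    · rw [if_pos hij, hin]
      have hout : (t * c + j + c * l - (s * c + i)) % (c * l)
          = (t + l - s) * c + (j - i) := by
        rw [Nat.sub_mul, Nat.add_mul, Nat.mul_comm l c,
          show t * c + j + c * l - (s * c + i) = t * c + c * l - s * c + (j - i) by omega]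
        exact Nat.mod_eq_of_lt (by omega)
      rw [hout]
    · rw [if_neg hij, hin]
      have hsh : (t + l - s + l - 1) % l = t + l - s - 1 := by
        rw [show t + l - s + l - 1 = (t + l - s - 1) + l by omega, Nat.add_mod_right]
        exact Nat.mod_eq_of_lt (by omega)
      have hout : (t * c + j + c * l - (s * c + i)) % (c * l)
          = (t + l - s - 1) * c + (c + j - i) := by
        rw [Nat.sub_mul, Nat.sub_mul, Nat.add_mul, Nat.one_mul, Nat.mul_comm l c,
          show t * c + j + c * l - (s * c + i)
            = t * c + c * l - s * c - c + (c + j - i) by omega]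
        exact Nat.mod_eq_of_lt (by omega)
      rw [hsh, hout]

end Paper
end

section
/- With the notation of the partial fraction decomposition of h(X): the reciprocal polynomial h̃(X) = X^k h(X^{-1}) of the parity-check polynomial of an (n,k) cyclic code with generator roots β_0, ..., β_{n-k-1} satisfies h̃(X) = Σ_{i=0}^{n-k-1} λ_i ṽ_i(X), where ṽ_i(X) = 1 + β_i X + β_i^2 X^2 + ... + β_i^{n-1} X^{n-1} and λ_i = β_i^{n-k-1} (∏_{j≠i} (β_i - β_j))^{-1}. -/
open Polynomial

namespace Paper

open Finset in
lemma reflect_prod_linear {K : Type*} [Field K] {ι : Type*} [DecidableEq ι]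
    (s : Finset ι) (b : ι → K) :
    (∏ i ∈ s, (X - C (b i))).reflect s.card = ∏ i ∈ s, (1 - C (b i) * X) := by
  induction s using Finset.induction_on with
  | empty => simp [reflect_one]
  | insert _ _ ha ih =>
    rename_i a s
    rw [prod_insert ha, prod_insert ha, card_insert_of_notMem ha, ← ih]
    rw [show s.card + 1 = 1 + s.card by ring]
    rw [reflect_mul _ _ (by simpa using natDegree_X_sub_C_le (b a))
      (le_trans (natDegree_prod_le _ _) (by simp))]
    congr 1
    rw [sub_eq_add_neg, ← C_neg, reflect_add, reflect_C]
    simp [sub_eq_add_neg]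

/-- The reciprocal `h̃(X) = X^k h(1/X)` of the parity-check polynomial of an `(n,k)` cyclic
code with generator roots `β₀, …, β_{n-k-1}` satisfies `h̃(X) = ∑ᵢ λᵢ ṽᵢ(X)`, where
`ṽᵢ(X) = 1 + βᵢ X + βᵢ² X² + ⋯ + βᵢ^{n-1} X^{n-1}` and
`λᵢ = βᵢ^{n-k-1} (∏_{j≠i} (βᵢ - βⱼ))⁻¹`. -/
theorem reciprocal_parity_check {K : Type*} [Field K]
    (n k : ℕ) (hk : k < n)
    (β : Fin (n - k) → K) (hinj : Function.Injective β)
    (hne : ∀ i, β i ≠ 0) (hroot : ∀ i, β i ^ n = 1)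
    (h : K[X]) (hdiv : (∏ i, (X - C (β i))) * h = X ^ n - 1) :
    h.reflect k = ∑ i, C (β i ^ (n - k - 1) * (∏ j ∈ Finset.univ.erase i, (β i - β j))⁻¹) *
          (∑ m ∈ Finset.range n, C (β i ^ m) * X ^ m) := by
  classical
  have hd0 : 0 < n - k := Nat.sub_pos_of_lt hk
  have hn0 : 0 < n := lt_of_le_of_lt (Nat.zero_le k) hk
  set g : K[X] := ∏ i, (X - C (β i)) with hg
  have hgmonic : g.Monic := monic_prod_of_monic _ _ (fun i _ => monic_X_sub_C (β i))
  have hgdeg : g.natDegree = n - k := by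
    rw [hg, natDegree_prod_of_monic _ _ (fun i _ => monic_X_sub_C (β i))]
    simp
  have hXn : (X : K[X]) ^ n - 1 ≠ 0 := by
    have := X_pow_sub_C_ne_zero hn0 (1 : K)
    simpa using this
  have hh0 : h ≠ 0 := by
    intro hc; rw [hc, mul_zero] at hdiv; exact hXn hdiv.symm
  have hhdeg : h.natDegree = k := by
    have h1 : (g * h).natDegree = g.natDegree + h.natDegree :=
      natDegree_mul (hgmonic.ne_zero) hh0
    rw [hdiv] at h1
    have h2 : ((X : K[X]) ^ n - 1).natDegree = n := by
      have := natDegree_X_pow_sub_C (n := n) (r := (1 : K))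
      rwa [map_one] at this
    rw [h2, hgdeg] at h1
    omega
  have key1 : g.reflect (n - k) * h.reflect k = 1 - X ^ n := by
    rw [← reflect_mul g h hgdeg.le hhdeg.le, hdiv]
    have hdk : n - k + k = n := by omega
    rw [hdk]
    rw [show ((X : K[X]) ^ n - 1) = X ^ n + C (-1) by rw [map_neg, C_1]; ring]
    rw [reflect_add, reflect_C, reflect_monomial, revAt_le (le_refl n)]
    simp [sub_eq_add_neg]
  have hgref : g.reflect (n - k) = ∏ i, (1 - C (β i) * X) := by
    have := reflect_prod_linear (Finset.univ : Finset (Fin (n - k))) β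
    simpa [hg] using this
  have hgeo : ∀ i, (1 - C (β i) * X) * (∑ m ∈ Finset.range n, C (β i ^ m) * X ^ m)
      = 1 - X ^ n := by
    intro i
    have h1 : (∑ m ∈ Finset.range n, C (β i ^ m) * X ^ m)
        = ∑ m ∈ Finset.range n, (C (β i) * X) ^ m := by
      refine Finset.sum_congr rfl fun m _ => ?_
      rw [mul_pow, ← C_pow]
    have h2 := geom_sum_mul (C (β i) * X) n
    have h3 : (C (β i) * X) ^ n = X ^ n := by
      rw [mul_pow, ← C_pow, hroot i, map_one, one_mul]
    rw [h1, mul_comm, ← neg_sub (C (β i) * X) 1, mul_neg, h2, h3, neg_sub]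
  set lam : Fin (n - k) → K :=
    fun i => β i ^ (n - k - 1) * (∏ j ∈ Finset.univ.erase i, (β i - β j))⁻¹ with hlam
  have hT : ∑ i, C (lam i) * ∏ j ∈ Finset.univ.erase i, (1 - C (β j) * X) = 1 := by
    have hvinj : Set.InjOn (fun i => (β i)⁻¹) (Finset.univ : Finset (Fin (n - k))) := by
      intro i _ j _ hij
      exact hinj (inv_injective hij)
    have hne' : (Finset.univ : Finset (Fin (n - k))).Nonempty := by
      have : Nonempty (Fin (n - k)) := ⟨⟨0, hd0⟩⟩
      exact Finset.univ_nonempty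
    have hsum := Lagrange.sum_basis hvinj hne'
    refine Eq.trans (Finset.sum_congr rfl fun i _ => ?_) hsum
    have hfac : ∀ j ∈ Finset.univ.erase i,
        Lagrange.basisDivisor (β i)⁻¹ (β j)⁻¹
          = C (β i * (β i - β j)⁻¹) * (1 - C (β j) * X) := by
      intro j hj
      have hji : j ≠ i := Finset.ne_of_mem_erase hj
      have hbij : β i ≠ β j := fun hc => hji.symm (hinj hc)
      have h1 : ((β i)⁻¹ - (β j)⁻¹)⁻¹ = β i * (β i - β j)⁻¹ * (-β j) := by
        refine inv_eq_of_mul_eq_one_right ?_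
        field_simp [hne i, hne j, sub_ne_zero.mpr hbij]
        ring
      have h2 : (1 : K[X]) - C (β j) * X = C (-β j) * (X - C (β j)⁻¹) := by
        rw [map_neg, neg_mul, mul_sub, ← C_mul, mul_inv_cancel₀ (hne j), C_1]
        ring
      rw [Lagrange.basisDivisor, h1, h2, ← mul_assoc, ← C_mul]
    have hcard : (Finset.univ.erase i).card = n - k - 1 := by
      rw [Finset.card_erase_of_mem (Finset.mem_univ i), Finset.card_univ, Fintype.card_fin]
    have hscal : ∏ x ∈ Finset.univ.erase i, (β i * (β i - β x)⁻¹)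
        = β i ^ (n - k - 1) * (∏ x ∈ Finset.univ.erase i, (β i - β x))⁻¹ := by
      rw [Finset.prod_mul_distrib, Finset.prod_const, hcard, Finset.prod_inv_distrib]
    rw [Lagrange.basis, Finset.prod_congr rfl hfac, Finset.prod_mul_distrib, ← map_prod, hscal]
  set G : K[X] := ∏ i, (1 - C (β i) * X) with hG
  have key2 : G * (∑ i, C (lam i) * (∑ m ∈ Finset.range n, C (β i ^ m) * X ^ m))
      = 1 - X ^ n := by
    rw [Finset.mul_sum]
    have hterm : ∀ i, G * (C (lam i) * (∑ m ∈ Finset.range n, C (β i ^ m) * X ^ m))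
        = (C (lam i) * ∏ j ∈ Finset.univ.erase i, (1 - C (β j) * X)) * (1 - X ^ n) := by
      intro i
      rw [hG, ← Finset.mul_prod_erase _ _ (Finset.mem_univ i)]
      rw [← hgeo i]
      ring
    rw [Finset.sum_congr rfl fun i _ => hterm i, ← Finset.sum_mul, hT, one_mul]
  have hGne : G ≠ 0 := by
    intro hc
    have := congrArg (Polynomial.eval 0) hc
    simp [hG, Polynomial.eval_prod] at this
  apply mul_left_cancel₀ hGne
  rw [key2, ← hgref, key1]

end Paper
end

section
/- Let ℒ be a line in EG(2,q) not through the origin (realized in GF(q^2) with primitive element α), let n = q^2 - 1 = c·l with c = (q+1)b, bl = q-1, and consider the l×l block Ψ_j (for column indices congruent to j mod c) in the π-decomposition of the circulant of incidence vectors. If two points y_1 = α^{l_1 c + j} and y_2 = α^{l_2 c + j} with 0 ≤ l_1 < l_2 < l both lie on a common line not through the origin, then y_2 = λ y_1 with λ = α^{(l_2 - l_1)c} ∈ GF(q) \ {0,1}, which yields a contradiction: y_2 would lie on two distinct parallel lines. Hence any line not through the origin contains at most one point from each set {α^{j}, α^{c+j}, ..., α^{(l-1)c+j}}. -/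
namespace Paper

open Polynomial in
theorem mem_range_of_pow_card_eq (F K : Type*) [Field F] [Field K] [Algebra F K]
    [Fintype F] (x : K) (hx : x ^ Fintype.card F = x) :
    x ∈ Set.range (algebraMap F K) := by
  classical
  set q := Fintype.card F with hq
  have hq1 : 1 < q := Fintype.one_lt_card
  have hp0 : (X ^ q - X : K[X]) ≠ 0 := FiniteField.X_pow_card_sub_X_ne_zero K hq1
  set S : Finset K := Finset.univ.image (algebraMap F K) with hS
  have hcardS : S.card = q := by
    rw [hS, Finset.card_image_of_injective _ (algebraMap F K).injective,
      Finset.card_univ]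
  have hSroots : S ⊆ (X ^ q - X : K[X]).roots.toFinset := by
    intro a ha
    simp only [hS, Finset.mem_image] at ha
    obtain ⟨y, -, rfl⟩ := ha
    rw [Multiset.mem_toFinset, mem_roots hp0]
    simp only [IsRoot, eval_sub, eval_pow, eval_X, ← map_pow]
    rw [show y ^ q = y from FiniteField.pow_card y, sub_self]
  have hcardroots : (X ^ q - X : K[X]).roots.toFinset.card ≤ q := by
    refine le_trans (Multiset.toFinset_card_le _) ?_
    refine le_trans (card_roots' _) ?_
    rw [FiniteField.X_pow_card_sub_X_natDegree_eq K hq1]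
  have hEq : S = (X ^ q - X : K[X]).roots.toFinset :=
    Finset.eq_of_subset_of_card_le hSroots (by omega)
  have hxroot : x ∈ (X ^ q - X : K[X]).roots.toFinset := by
    rw [Multiset.mem_toFinset, mem_roots hp0]
    simp [IsRoot, hx]
  rw [← hEq, hS] at hxroot
  simp only [Finset.mem_image] at hxroot
  obtain ⟨y, -, rfl⟩ := hxroot
  exact ⟨y, rfl⟩

/-- A line of the affine plane EG(2,q) realized in the 2-dimensional GF(q)-vector space `K`. -/
def IsLine (F : Type*) [Field F] {K : Type*} [Field K] [Algebra F K] (L : Set K) : Prop :=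
  ∃ x z : K, x ≠ 0 ∧ L = {p | ∃ c : F, p = z + c • x}

/-- With `n = q² - 1 = c·l`, `c = (q+1)b`, `b·l = q - 1`: for `0 < d < l` the element
`α^{dc}` is a nonzero element of GF(q) different from `1`; consequently (since two points
`y₂ = λy₁` with such a `λ` would lie on two distinct parallel lines) any line not through
the origin contains at most one point from each set `{α^j, α^{c+j}, …, α^{(l-1)c+j}}`. -/
theorem line_section_lemma (F K : Type*) [Field F] [Field K] [Algebra F K]
    [Fintype F] [Fintype K] (q b l c : ℕ) (hq : Fintype.card F = q)
    (hdim : Module.finrank F K = 2) (hbl : b * l = q - 1) (hc : c = (q + 1) * b)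
    (hb : 0 < b) (hl : 0 < l)
    (α : K) (hα : IsPrimitiveRoot α (q ^ 2 - 1))
    (L : Set K) (hL : IsLine F L) (h0 : (0 : K) ∉ L) :
    (∀ d : ℕ, 0 < d → d < l →
      α ^ (d * c) ∈ Set.range (algebraMap F K) ∧ α ^ (d * c) ≠ 1 ∧ α ^ (d * c) ≠ 0) ∧
    (∀ j l₁ l₂ : ℕ, l₁ < l → l₂ < l →
      α ^ (l₁ * c + j) ∈ L → α ^ (l₂ * c + j) ∈ L → l₁ = l₂) := by
  have hq2 : 2 ≤ q := by rw [← hq]; exact Fintype.one_lt_card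
  have hq4 : 4 ≤ q ^ 2 := by nlinarith
  have hn : q ^ 2 - 1 = (q + 1) * (q - 1) := by
    have := Nat.sq_sub_sq q 1
    simpa using this
  have hc0 : 0 < c := by rw [hc]; positivity
  have hα1 : α ^ (q ^ 2 - 1) = 1 := hα.pow_eq_one
  have hαne : α ≠ 0 := hα.ne_zero (by omega)
  have hlc : l * c = q ^ 2 - 1 := by
    rw [hc, hn, show l * ((q + 1) * b) = (q + 1) * (b * l) by ring, hbl]
  have part1 : ∀ d : ℕ, 0 < d → d < l →
      α ^ (d * c) ∈ Set.range (algebraMap F K) ∧ α ^ (d * c) ≠ 1 ∧ α ^ (d * c) ≠ 0 := by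
    intro d hd0 hdl
    have hdc_pos : 0 < d * c := Nat.mul_pos hd0 hc0
    have hdc_lt : d * c < q ^ 2 - 1 := by
      rw [← hlc]; exact (Nat.mul_lt_mul_right hc0).mpr hdl
    refine ⟨?_, hα.pow_ne_one_of_pos_of_lt hdc_pos.ne' hdc_lt, pow_ne_zero _ hαne⟩
    apply mem_range_of_pow_card_eq
    rw [hq]
    have hsub : (α ^ (d * c)) ^ (q - 1) = 1 := by
      rw [← pow_mul]
      have hmul : d * c * (q - 1) = (q ^ 2 - 1) * (d * b) := by
        set r := q - 1 with hr
        rw [hc, hn]; ring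
      rw [hmul, pow_mul, hα1, one_pow]
    calc (α ^ (d * c)) ^ q = (α ^ (d * c)) ^ (q - 1) * α ^ (d * c) := by
          rw [← pow_succ]; congr 1; omega
      _ = α ^ (d * c) := by rw [hsub, one_mul]
  refine ⟨part1, ?_⟩
  have key : ∀ j l₁ l₂ : ℕ, l₁ < l₂ → l₂ < l →
      α ^ (l₁ * c + j) ∈ L → α ^ (l₂ * c + j) ∈ L → False := by
    intro j l₁ l₂ h12 h2l m1 m2
    set d := l₂ - l₁ with hd
    obtain ⟨⟨f, hf⟩, hne1, -⟩ := part1 d (by omega) (by omega)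
    have hpow : α ^ (l₂ * c + j) = α ^ (d * c) * α ^ (l₁ * c + j) := by
      rw [← pow_add]; congr 1
      have h1 : d * c = l₂ * c - l₁ * c := by rw [hd, Nat.sub_mul]
      have h2 : l₁ * c ≤ l₂ * c := Nat.mul_le_mul_right c h12.le
      omega
    obtain ⟨x, z, hx, hLset⟩ := hL
    rw [hLset] at m1 m2 h0
    obtain ⟨e₁, he₁⟩ := m1
    obtain ⟨e₂, he₂⟩ := m2
    have hf1 : f ≠ 1 := by
      intro h; apply hne1; rw [← hf, h, map_one]
    have hf1' : algebraMap F K f - 1 ≠ 0 := by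
      rw [sub_ne_zero]
      exact fun h => hf1 ((algebraMap F K).injective (by rw [h, map_one]))
    have he₁' : α ^ (l₁ * c + j) = z + algebraMap F K e₁ * x := by
      rw [he₁, Algebra.smul_def]
    have he₂' : α ^ (l₂ * c + j) = z + algebraMap F K e₂ * x := by
      rw [he₂, Algebra.smul_def]
    have heq : z + algebraMap F K e₂ * x
        = algebraMap F K f * (z + algebraMap F K e₁ * x) := by
      rw [← he₁', ← he₂', hf, ← hpow]
    apply h0
    refine ⟨(f * e₁ - e₂) / (f - 1), ?_⟩
    rw [Algebra.smul_def, map_div₀, map_sub, map_sub, map_mul, map_one]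
    field_simp
    linear_combination heq
  intro j l₁ l₂ h1 h2 m1 m2
  rcases lt_trichotomy l₁ l₂ with h | h | h
  · exact absurd (key j l₁ l₂ h h2 m1 m2) (by simp)
  · exact h
  · exact absurd (key j l₂ l₁ h h1 m2 m1) (by simp)

end Paper
end

section
/- Let H be an m×n binary matrix with constant column weight γ satisfying the row-column constraint (no two rows share more than one position where both have a 1). Then any nonzero binary n-tuple in the null space of H has Hamming weight at least γ + 1; i.e., the minimum distance of the code defined by H is at least γ + 1. -/
namespace Paper

/-- An RC-constrained binary parity-check matrix with constant column weight `γ` (no two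
rows share more than one common `1`-position) defines a code with minimum distance at
least `γ + 1`: every nonzero vector in its null space has Hamming weight at least `γ + 1`. -/
theorem rc_min_distance (m n γ : ℕ)
    (H : Matrix (Fin m) (Fin n) (ZMod 2))
    (hcol : ∀ j : Fin n, (Finset.univ.filter fun i : Fin m => H i j = 1).card = γ)
    (hrc : ∀ i i' : Fin m, i ≠ i' →
      (Finset.univ.filter fun j : Fin n => H i j = 1 ∧ H i' j = 1).card ≤ 1)
    (x : Fin n → ZMod 2) (hx : H.mulVec x = 0) (hx0 : x ≠ 0) :
    γ + 1 ≤ (Finset.univ.filter fun j : Fin n => x j ≠ 0).card := by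
  classical
  have htwo : ∀ a : ZMod 2, a ≠ 0 → a = 1 := by decide
  have htwo' : ∀ a : ZMod 2, a ≠ 1 → a = 0 := by decide
  obtain ⟨j0, hj0⟩ : ∃ j0, x j0 ≠ 0 := by
    by_contra h; push_neg at h; exact hx0 (funext h)
  set S := Finset.univ.filter fun j : Fin n => x j ≠ 0 with hS
  have hj0S : j0 ∈ S := by simp [hS, hj0]
  have key : ∀ i : Fin m, ∃ j, H i j0 = 1 → j ≠ j0 ∧ H i j = 1 ∧ x j ≠ 0 := by
    intro i
    by_cases hi : H i j0 = 1
    · by_contra h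
      push_neg at h
      have h' : ∀ j, j ≠ j0 → H i j = 1 → x j = 0 := fun j => (h j).2
      have hsum : ∑ j, H i j * x j = 0 := by
        have := congrFun hx i
        simpa [Matrix.mulVec, dotProduct] using this
      have hone : ∑ j, H i j * x j = 1 := by
        rw [Finset.sum_eq_single j0]
        · rw [hi, htwo _ hj0, one_mul]
        · intro j _ hj
          rcases eq_or_ne (H i j) 1 with h1 | h1
          · simp [h' j hj h1]
          · simp [htwo' _ h1]
        · simp
      rw [hsum] at hone; exact one_ne_zero hone.symm
    · exact ⟨j0, fun h => absurd h hi⟩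
  choose f hf using key
  set R := Finset.univ.filter fun i : Fin m => H i j0 = 1 with hR
  have hmem : ∀ i ∈ R, H i j0 = 1 := by intro i hi; simpa [hR] using hi
  have hmaps : ∀ i ∈ R, f i ∈ S.erase j0 := by
    intro i hi
    obtain ⟨h1, h2, h3⟩ := hf i (hmem i hi)
    simp [hS, h1, h3]
  have hinj : Set.InjOn f ↑R := by
    intro i hi i' hi' hff
    by_contra hne
    obtain ⟨h1, h2, h3⟩ := hf i (hmem i hi)
    obtain ⟨h1', h2', h3'⟩ := hf i' (hmem i' hi')
    have hsub : insert j0 {f i} ⊆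
        Finset.univ.filter fun j : Fin n => H i j = 1 ∧ H i' j = 1 := by
      intro j hj
      simp only [Finset.mem_insert, Finset.mem_singleton] at hj
      rcases hj with rfl | rfl
      · simp [hmem i hi, hmem i' hi']
      · simp [h2, hff ▸ h2']
    have hcard2 : (insert j0 ({f i} : Finset (Fin n))).card = 2 := by
      rw [Finset.card_insert_of_notMem (by simp [Ne.symm h1])]
      simp
    have hcc := Finset.card_le_card hsub
    rw [hcard2] at hcc
    have := hrc i i' hne
    omega
  have hle : R.card ≤ (S.erase j0).card :=
    Finset.card_le_card_of_injOn f hmaps hinj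
  have hRc : R.card = γ := hcol j0
  have : (S.erase j0).card = S.card - 1 := Finset.card_erase_of_mem hj0S
  have hpos : 1 ≤ S.card := Finset.card_pos.mpr ⟨j0, hj0S⟩
  omega

end Paper
end

section
/- Let H be an m×n binary matrix with constant column weight γ satisfying the row-column constraint. For an error pattern e with t ≤ γ nonzero positions, the number of rows h_i of H with e·h_i^T = 1 (odd-degree check nodes of the induced subgraph) is at least t(γ - (t - 1)). In particular, for t ≤ γ, every (t, τ) trapping set of the Tanner graph of H with t ≤ γ variable nodes satisfies τ ≥ t(γ - t + 1) ≥ γ. -/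
namespace Paper

/-- Trapping-set bound for an RC-constrained binary matrix with constant column weight `γ`:
for any set `S` of `t ≤ γ` variable nodes, the number of check nodes of odd degree in the
induced subgraph (rows `i` with `e·hᵢᵀ = 1` for the error pattern supported on `S`) is at
least `t(γ - (t-1))`; in particular (for `t ≥ 1`) it is at least `γ`. -/
theorem rc_trapping_bound (m n γ t : ℕ)
    (H : Matrix (Fin m) (Fin n) (ZMod 2))
    (hcol : ∀ j : Fin n, (Finset.univ.filter fun i : Fin m => H i j = 1).card = γ)
    (hrc : ∀ i i' : Fin m, i ≠ i' →
      (Finset.univ.filter fun j : Fin n => H i j = 1 ∧ H i' j = 1).card ≤ 1)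
    (S : Finset (Fin n)) (hS : S.card = t) (ht : t ≤ γ) :
    t * (γ - (t - 1)) ≤
      (Finset.univ.filter fun i : Fin m =>
        ¬ Even (S.filter fun j => H i j = 1).card).card ∧
    (1 ≤ t → γ ≤
      (Finset.univ.filter fun i : Fin m =>
        ¬ Even (S.filter fun j => H i j = 1).card).card) := by
  classical
  set Odd1 : Finset (Fin m) := (Finset.univ.filter fun i : Fin m =>
    ¬ Even (S.filter fun j => H i j = 1).card) with hOdd1
  have main : t * (γ - (t - 1)) ≤ Odd1.card := by
    set T : Fin n → Finset (Fin m) := fun j =>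
      Finset.univ.filter fun i => H i j = 1 ∧ (S.filter fun j' => H i j' = 1).card = 1
      with hT
    have hsub : S.biUnion T ⊆ Odd1 := by
      intro i hi
      simp only [Finset.mem_biUnion, hT, Finset.mem_filter, Finset.mem_univ, true_and] at hi
      obtain ⟨j, hj, hij, hcard⟩ := hi
      simp only [hOdd1, Finset.mem_filter, Finset.mem_univ, true_and, hcard]
      decide
    have hdisj : ∀ j ∈ S, ∀ j' ∈ S, j ≠ j' → Disjoint (T j) (T j') := by
      intro j hj j' hj' hne
      rw [Finset.disjoint_left]
      intro i hi hi'
      simp only [hT, Finset.mem_filter, Finset.mem_univ, true_and] at hi hi'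
      have hj1 : j ∈ S.filter (fun c => H i c = 1) := Finset.mem_filter.mpr ⟨hj, hi.1⟩
      have hj2 : j' ∈ S.filter (fun c => H i c = 1) := Finset.mem_filter.mpr ⟨hj', hi'.1⟩
      exact hne (Finset.card_le_one.mp (le_of_eq hi.2) j hj1 j' hj2)
    have hcount : ∀ j ∈ S, γ - (t - 1) ≤ (T j).card := by
      intro j hj
      set B : Finset (Fin m) := Finset.univ.filter
        (fun i => H i j = 1 ∧ (S.filter fun j' => H i j' = 1).card ≠ 1) with hB
      have hchoice : ∀ i : Fin m, ∃ j' : Fin n, i ∈ B → j' ∈ S.erase j ∧ H i j' = 1 := by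
        intro i
        by_cases hi : i ∈ B
        · simp only [hB, Finset.mem_filter, Finset.mem_univ, true_and] at hi
          have hmem : j ∈ S.filter fun j' => H i j' = 1 := Finset.mem_filter.mpr ⟨hj, hi.1⟩
          have h1 : 1 < (S.filter fun j' => H i j' = 1).card := by
            have hpos : 0 < (S.filter fun j' => H i j' = 1).card :=
              Finset.card_pos.mpr ⟨j, hmem⟩
            omega
          obtain ⟨b, hb, hbne⟩ := Finset.exists_mem_ne h1 j
          rw [Finset.mem_filter] at hb
          exact ⟨b, fun _ => ⟨Finset.mem_erase.mpr ⟨hbne, hb.1⟩, hb.2⟩⟩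
        · exact ⟨j, fun h => absurd h hi⟩
      choose f hf using hchoice
      have hBcard : B.card ≤ t - 1 := by
        have hle : B.card ≤ (S.erase j).card := by
          apply Finset.card_le_card_of_injOn f (fun i hi => (hf i hi).1)
          intro i hi i' hi' heq
          by_contra hne
          have hiB : i ∈ B := hi
          have hi'B : i' ∈ B := hi'
          have hi1 : H i j = 1 := by
            simp only [hB, Finset.mem_filter, Finset.mem_univ, true_and] at hiB
            exact hiB.1
          have hi'1 : H i' j = 1 := by
            simp only [hB, Finset.mem_filter, Finset.mem_univ, true_and] at hi'B
            exact hi'B.1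
          have hfi := hf i hi
          have hfi' := hf i' hi' 
          have hfij : f i ≠ j := (Finset.mem_erase.mp hfi.1).1
          have hcard2 : 1 < (Finset.univ.filter fun c => H i c = 1 ∧ H i' c = 1).card := by
            apply Finset.one_lt_card.mpr
            refine ⟨j, ?_, f i, ?_, fun h => hfij h.symm⟩
            · exact Finset.mem_filter.mpr ⟨Finset.mem_univ _, hi1, hi'1⟩
            · refine Finset.mem_filter.mpr ⟨Finset.mem_univ _, hfi.2, ?_⟩
              rw [heq]; exact hfi'.2
          exact absurd (hrc i i' hne) (by omega)
        rwa [Finset.card_erase_of_mem hj, hS] at hle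
      have hNsub : (Finset.univ.filter fun i : Fin m => H i j = 1) ⊆ T j ∪ B := by
        intro i hi
        rw [Finset.mem_filter] at hi
        by_cases hc : (S.filter fun j' => H i j' = 1).card = 1
        · exact Finset.mem_union_left _ (by
            simp only [hT, Finset.mem_filter, Finset.mem_univ, true_and]; exact ⟨hi.2, hc⟩)
        · exact Finset.mem_union_right _ (by
            simp only [hB, Finset.mem_filter, Finset.mem_univ, true_and]; exact ⟨hi.2, hc⟩)
      have hγle : γ ≤ (T j).card + B.card := by
        calc γ = (Finset.univ.filter fun i : Fin m => H i j = 1).card := (hcol j).symm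
          _ ≤ (T j ∪ B).card := Finset.card_le_card hNsub
          _ ≤ (T j).card + B.card := Finset.card_union_le _ _
      omega
    calc t * (γ - (t - 1)) = ∑ _j ∈ S, (γ - (t - 1)) := by
          rw [Finset.sum_const, hS, smul_eq_mul]
      _ ≤ ∑ j ∈ S, (T j).card := Finset.sum_le_sum hcount
      _ = (S.biUnion T).card := (Finset.card_biUnion hdisj).symm
      _ ≤ Odd1.card := Finset.card_le_card hsub
  refine ⟨main, fun ht1 => le_trans ?_ main⟩
  obtain ⟨d, hd⟩ := Nat.exists_eq_add_of_le ht
  have h1 : γ - (t - 1) = d + 1 := by omega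
  rw [h1]
  nlinarith

end Paper
end

section
/- Let H be an m×n binary matrix with constant column weight γ > 3 satisfying the row-column constraint. Then the Tanner graph of H contains no (κ,τ) trapping set with κ < γ - 3 and τ < 4κ; equivalently, for any set of κ ≤ γ - 4 variable nodes, the number of odd-degree check nodes in the induced subgraph is at least 4κ. -/
namespace Paper

/-- For an RC-constrained binary matrix with constant column weight `γ > 3`, the Tanner
graph contains no `(κ,τ)` trapping set with `κ < γ - 3` and `τ < 4κ`: any set of `κ < γ - 3`
variable nodes induces at least `4κ` odd-degree check nodes. -/
theorem rc_no_small_trapping (m n γ : ℕ) (hγ : 3 < γ)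
    (H : Matrix (Fin m) (Fin n) (ZMod 2))
    (hcol : ∀ j : Fin n, (Finset.univ.filter fun i : Fin m => H i j = 1).card = γ)
    (hrc : ∀ i i' : Fin m, i ≠ i' →
      (Finset.univ.filter fun j : Fin n => H i j = 1 ∧ H i' j = 1).card ≤ 1)
    (S : Finset (Fin n)) (hS : S.card < γ - 3) :
    4 * S.card ≤
      (Finset.univ.filter fun i : Fin m =>
        ¬ Even (S.filter fun j => H i j = 1).card).card := by
  classical
  -- column version of the RC constraint
  have hrc' : ∀ j j' : Fin n, j ≠ j' →
      (Finset.univ.filter fun i : Fin m => H i j = 1 ∧ H i j' = 1).card ≤ 1 := by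
    intro j j' hne
    rw [Finset.card_le_one]
    intro i hi i' hi'
    simp only [Finset.mem_filter, Finset.mem_univ, true_and] at hi hi'
    by_contra hii
    have h2 : ({j, j'} : Finset (Fin n)) ⊆
        Finset.univ.filter fun k : Fin n => H i k = 1 ∧ H i' k = 1 := by
      intro k hk
      simp only [Finset.mem_insert, Finset.mem_singleton] at hk
      rcases hk with rfl | rfl <;>
        simp [Finset.mem_filter, hi.1, hi.2, hi'.1, hi'.2]
    have := Finset.card_le_card h2
    rw [Finset.card_pair hne] at this
    exact absurd (le_trans this (hrc i i' hii)) (by norm_num)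
  set T : Fin n → Finset (Fin m) := fun j =>
    Finset.univ.filter (fun i => H i j = 1 ∧ ∀ j' ∈ S, j' ≠ j → H i j' ≠ 1) with hT
  have hsub : ∀ j ∈ S, T j ⊆
      Finset.univ.filter fun i : Fin m =>
        ¬ Even (S.filter fun k => H i k = 1).card := by
    intro j hj i hi
    simp only [hT, Finset.mem_filter, Finset.mem_univ, true_and] at hi
    simp only [Finset.mem_filter, Finset.mem_univ, true_and]
    have hone : S.filter (fun k => H i k = 1) = {j} := by
      ext k
      simp only [Finset.mem_filter, Finset.mem_singleton]
      constructor
      · rintro ⟨hk, h1⟩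
        by_contra hne
        exact hi.2 k hk hne h1
      · rintro rfl; exact ⟨hj, hi.1⟩
    rw [hone]
    simp
  have hdisj : ∀ j ∈ S, ∀ j' ∈ S, j ≠ j' → Disjoint (T j) (T j') := by
    intro j hj j' hj' hne
    rw [Finset.disjoint_left]
    intro i hi hi'
    simp only [hT, Finset.mem_filter, Finset.mem_univ, true_and] at hi hi'
    exact hi'.2 j hj hne hi.1
  have hcard : ∀ j ∈ S, 4 ≤ (T j).card := by
    intro j hj
    have key : (Finset.univ.filter fun i : Fin m => H i j = 1) ⊆
        T j ∪ (S.erase j).biUnion (fun j' =>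
          Finset.univ.filter fun i => H i j' = 1 ∧ H i j = 1) := by
      intro i hi
      simp only [Finset.mem_filter, Finset.mem_univ, true_and] at hi
      by_cases h : ∀ j' ∈ S, j' ≠ j → H i j' ≠ 1
      · exact Finset.mem_union_left _ (by
          simp only [hT, Finset.mem_filter, Finset.mem_univ, true_and]
          exact ⟨hi, h⟩)
      · push_neg at h
        obtain ⟨j', hj', hne, h1⟩ := h
        refine Finset.mem_union_right _ ?_
        simp only [Finset.mem_biUnion, Finset.mem_erase, Finset.mem_filter,
          Finset.mem_univ, true_and]
        exact ⟨j', ⟨hne, hj'⟩, h1, hi⟩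
    have h1 : γ ≤ (T j).card + (S.erase j).card := by
      calc γ = (Finset.univ.filter fun i : Fin m => H i j = 1).card := (hcol j).symm
        _ ≤ _ := Finset.card_le_card key
        _ ≤ (T j).card + ((S.erase j).biUnion _).card := Finset.card_union_le _ _
        _ ≤ (T j).card + (S.erase j).card := by
            gcongr
            refine le_trans Finset.card_biUnion_le ?_
            refine le_trans (Finset.sum_le_card_nsmul _ _ 1 ?_) (by simp)
            intro j' hj'
            exact hrc' j' j (Finset.mem_erase.mp hj').1
    have h2 : (S.erase j).card = S.card - 1 := Finset.card_erase_of_mem hj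
    have h3 : 1 ≤ S.card := Finset.card_pos.mpr ⟨j, hj⟩
    omega
  calc 4 * S.card = ∑ j ∈ S, 4 := by rw [Finset.sum_const, smul_eq_mul, mul_comm]
    _ ≤ ∑ j ∈ S, (T j).card := Finset.sum_le_sum hcard
    _ = (S.biUnion T).card := (Finset.card_biUnion hdisj).symm
    _ ≤ _ := Finset.card_le_card (by
        intro i hi
        obtain ⟨j, hj, hij⟩ := Finset.mem_biUnion.mp hi
        exact hsub j hj hij)

end Paper
end

section
/- Let C_EG be the binary cyclic code of length n = 2^{2s} - 1 given by the null space of the circulant H_EG of incidence vectors of lines of EG(2,2^s) not through the origin, and suppose an error pattern e has exactly 2^s nonzero positions corresponding to the 2^s points of a single line L not through the origin. Then the subgraph of the Tanner graph induced by e has exactly 2^s(2^s - 1) check nodes of degree 1 and exactly one check node of degree 2^s (the one corresponding to L); i.e., the induced trapping set is a (2^s, 2^s(2^s-1)) trapping set (for s ≥ 2, all these degree counts follow since any two of the 2^s points lie together on exactly one line not through the origin, namely L itself). -/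
namespace Paper

section Aux

variable {F K : Type*} [Field F] [Field K] [Algebra F K]

lemma li_of_not_mem {x z : K} (hxne : x ≠ 0)
    (h0 : (0 : K) ∉ {p : K | ∃ c : F, p = z + c • x}) :
    LinearIndependent F ![x, z] := by
  rw [LinearIndependent.pair_iff]
  intro s t h
  rcases eq_or_ne t 0 with ht | ht
  · subst ht
    have hs : s • x = 0 := by simpa using h
    rcases smul_eq_zero.mp hs with h' | h'
    · exact ⟨h', rfl⟩
    · exact absurd h' hxne
  · exfalso
    apply h0
    refine ⟨t⁻¹ * s, ?_⟩
    have h2 : t • (z + (t⁻¹ * s) • x) = 0 := by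
      rw [smul_add, smul_smul, mul_inv_cancel_left₀ ht]
      rw [add_comm]
      exact h
    rcases smul_eq_zero.mp h2 with h' | h'
    · exact absurd h' ht
    · exact h'.symm

lemma pair_li {f : Module.Dual F K} {x z : K} (hxne : x ≠ 0) (hx : f x = 0)
    (hz : f z = 1) : LinearIndependent F ![x, z] := by
  rw [LinearIndependent.pair_iff]
  intro s t h
  have ht : t = 0 := by
    have h2 := congrArg f h
    simpa [hx, hz] using h2
  subst ht
  have hs : s • x = 0 := by simpa using h
  rcases smul_eq_zero.mp hs with h' | h'
  · exact ⟨h', rfl⟩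
  · exact absurd h' hxne

lemma exists_coords {x z : K} (li : LinearIndependent F ![x, z])
    (hdim : Module.finrank F K = 2) (p : K) : ∃ a c : F, p = a • x + c • z := by
  set b := basisOfLinearIndependentOfCardEqFinrank li (by simp [hdim]) with hb
  have hcoe : ⇑b = ![x, z] := coe_basisOfLinearIndependentOfCardEqFinrank li _
  have hb0 : b 0 = x := by rw [hcoe]; rfl
  have hb1 : b 1 = z := by rw [hcoe]; rfl
  refine ⟨b.repr p 0, b.repr p 1, ?_⟩
  have h := b.sum_repr p
  rw [Fin.sum_univ_two, hb0, hb1] at h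
  exact h.symm

lemma dual_ext {f g : Module.Dual F K} {x z : K} (li : LinearIndependent F ![x, z])
    (hdim : Module.finrank F K = 2) (h1 : f x = g x) (h2 : f z = g z) : f = g := by
  apply LinearMap.ext
  intro p
  obtain ⟨a, c, rfl⟩ := exists_coords li hdim p
  simp [h1, h2]

lemma preimage_eq {f : Module.Dual F K} {x z : K} (hxne : x ≠ 0) (hx : f x = 0)
    (hz : f z = 1) (hdim : Module.finrank F K = 2) :
    f ⁻¹' {1} = {p : K | ∃ c : F, p = z + c • x} := by
  ext p
  simp only [Set.mem_preimage, Set.mem_singleton_iff, Set.mem_setOf_eq]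
  constructor
  · intro hp
    obtain ⟨a, c, rfl⟩ := exists_coords (pair_li hxne hx hz) hdim p
    have hc : c = 1 := by simpa [hx, hz] using hp
    subst hc
    exact ⟨a, by rw [one_smul, add_comm]⟩
  · rintro ⟨c, rfl⟩
    simp [hx, hz]

lemma exists_xz {f : Module.Dual F K} (hf : f ≠ 0) (hdim : Module.finrank F K = 2) :
    ∃ x z : K, x ≠ 0 ∧ f x = 0 ∧ f z = 1 := by
  obtain ⟨w, hw⟩ : ∃ w, f w ≠ 0 := by
    by_contra h
    push_neg at h
    exact hf (LinearMap.ext fun w => by simp [h w])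
  have hker : ∃ x, x ≠ 0 ∧ f x = 0 := by
    by_contra h
    push_neg at h
    have hker0 : ∀ m, f m = 0 → m = 0 := by
      intro m hm
      by_contra hm0
      exact h m hm0 hm
    have hinj : Function.Injective f :=
      LinearMap.ker_eq_bot.mp (LinearMap.ker_eq_bot'.mpr hker0)
    have := LinearMap.finrank_le_finrank_of_injective hinj
    rw [hdim, Module.finrank_self] at this
    omega
  obtain ⟨x, hx0, hx⟩ := hker
  exact ⟨x, (f w)⁻¹ • w, hx0, hx, by simp [inv_mul_cancel₀ hw]⟩

lemma line_functional {M : Set K} (hdim : Module.finrank F K = 2) (hM : IsLine F M)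
    (hM0 : (0 : K) ∉ M) : ∃ f : Module.Dual F K, f ≠ 0 ∧ M = f ⁻¹' {1} := by
  obtain ⟨x, z, hxne, rfl⟩ := hM
  have li : LinearIndependent F ![x, z] := li_of_not_mem hxne hM0
  set b := basisOfLinearIndependentOfCardEqFinrank li (by simp [hdim]) with hb
  have hcoe : ⇑b = ![x, z] := coe_basisOfLinearIndependentOfCardEqFinrank li _
  have hb0 : b 0 = x := by rw [hcoe]; rfl
  have hb1 : b 1 = z := by rw [hcoe]; rfl
  refine ⟨b.coord 1, ?_, ?_⟩
  · intro hc
    have h1 : b.coord 1 (b 1) = 1 := by simp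
    rw [hc] at h1
    simp at h1
  · have hfx : b.coord 1 x = 0 := by rw [← hb0]; simp
    have hfz : b.coord 1 z = 1 := by rw [← hb1]; simp
    exact (preimage_eq hxne hfx hfz hdim).symm

lemma preimage_inj {f g : Module.Dual F K} (hf : f ≠ 0) (hg : g ≠ 0)
    (hdim : Module.finrank F K = 2) (h : f ⁻¹' {1} = g ⁻¹' ({1} : Set F)) : f = g := by
  obtain ⟨x, z, hxne, hfx, hfz⟩ := exists_xz hf hdim
  have hz : z ∈ f ⁻¹' {1} := by simp [hfz]
  have hzx : z + x ∈ f ⁻¹' {1} := by simp [hfx, hfz]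
  rw [h] at hz hzx
  have hgz : g z = 1 := hz
  have hgzx : g (z + x) = 1 := hzx
  have hgx : g x = 0 := by
    have : g z + g x = 1 := by rw [← map_add]; exact hgzx
    rw [hgz] at this
    exact add_eq_left.mp this
  exact dual_ext (pair_li hxne hfx hfz) hdim (by rw [hfx, hgx]) (by rw [hfz, hgz])

lemma inter_one {f g : Module.Dual F K} {x z : K} (hxne : x ≠ 0) (hgx : g x = 0)
    (hgz : g z = 1) (hdim : Module.finrank F K = 2) (hfx : f x ≠ 0) :
    (f ⁻¹' {1} ∩ g ⁻¹' {1}).ncard = 1 := by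
  have heq : f ⁻¹' {1} ∩ g ⁻¹' {1} = {z + ((1 - f z) / f x) • x} := by
    ext p
    simp only [Set.mem_inter_iff, Set.mem_preimage, Set.mem_singleton_iff]
    constructor
    · rintro ⟨hp1, hp2⟩
      obtain ⟨a, c, rfl⟩ := exists_coords (pair_li hxne hgx hgz) hdim p
      have hc : c = 1 := by simpa [hgx, hgz] using hp2
      subst hc
      have ha : a * f x + f z = 1 := by simpa using hp1
      have ha' : a = (1 - f z) / f x := by
        field_simp
        linear_combination ha
      rw [ha', one_smul, add_comm]
    · rintro rfl
      constructor
      · simp only [map_add, map_smul, smul_eq_mul]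
        field_simp
        ring
      · simp [hgx, hgz]
  rw [heq, Set.ncard_singleton]

lemma ncard_line [Fintype F] {x : K} (hxne : x ≠ 0) (z : K) :
    ({p : K | ∃ c : F, p = z + c • x}).ncard = Fintype.card F := by
  have heq : {p : K | ∃ c : F, p = z + c • x} = (fun c : F => z + c • x) '' Set.univ := by
    ext p
    simp [eq_comm]
  rw [heq, Set.ncard_image_of_injective _ ?_, Set.ncard_univ, Nat.card_eq_fintype_card]
  intro c₁ c₂ h
  exact smul_left_injective F hxne (add_left_cancel h)

end Aux

/-- For the cyclic EG-LDPC code from EG(2,2^s): if the error pattern is supported exactly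
on the `2^s` points of a line `L` not through the origin, then the induced subgraph of the
Tanner graph has exactly `2^s(2^s - 1)` check nodes of degree 1 (lines not through the
origin meeting `L` in one point) and exactly one check node of degree `2^s`, namely `L`
itself; i.e. it is a `(2^s, 2^s(2^s - 1))` trapping set. -/
theorem line_trapping_set (F K : Type*) [Field F] [Field K] [Algebra F K] [Fintype F]
    (s : ℕ) (hs : 2 ≤ s) (hq : Fintype.card F = 2 ^ s)
    (hdim : Module.finrank F K = 2)
    (L : Set K) (hL : IsLine F L) (h0 : (0 : K) ∉ L) :
    {M : Set K | IsLine F M ∧ (0 : K) ∉ M ∧ (M ∩ L).ncard = 1}.ncard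
        = 2 ^ s * (2 ^ s - 1) ∧
    {M : Set K | IsLine F M ∧ (0 : K) ∉ M ∧ (M ∩ L).ncard = 2 ^ s} = {L} := by
  have hq4 : 4 ≤ 2 ^ s := by
    calc (4 : ℕ) = 2 ^ 2 := rfl
    _ ≤ 2 ^ s := Nat.pow_le_pow_right (by norm_num) hs
  obtain ⟨x, z, hxne, hLeq⟩ := hL
  have h0' : (0 : K) ∉ {p : K | ∃ c : F, p = z + c • x} := by rw [← hLeq]; exact h0
  have li : LinearIndependent F ![x, z] := li_of_not_mem hxne h0'
  set b := basisOfLinearIndependentOfCardEqFinrank li (by simp [hdim]) with hb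
  have hcoe : ⇑b = ![x, z] := coe_basisOfLinearIndependentOfCardEqFinrank li _
  have hb0 : b 0 = x := by rw [hcoe]; rfl
  have hb1 : b 1 = z := by rw [hcoe]; rfl
  set g : Module.Dual F K := b.coord 1 with hg
  have hgx : g x = 0 := by rw [hg, ← hb0]; simp
  have hgz : g z = 1 := by rw [hg, ← hb1]; simp
  have hg0 : g ≠ 0 := by
    intro hc
    rw [hc] at hgz
    simp at hgz
  have hLpre : L = g ⁻¹' {1} := by rw [hLeq, preimage_eq hxne hgx hgz hdim]
  have hLcard : L.ncard = 2 ^ s := by rw [hLeq, ncard_line hxne z, hq]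
  -- intersection cardinalities for functionals killing x
  have hvert : ∀ f : Module.Dual F K, f ≠ 0 → f x = 0 →
      (f ⁻¹' {1} ∩ L).ncard = 1 → False := by
    intro f hf0 hfx hcard
    have hfg : f = f z • g :=
      dual_ext li hdim (by simp [hfx, hgx]) (by simp [hgz])
    rcases eq_or_ne (f z) 1 with h1 | h1
    · have : f = g := by rw [hfg, h1, one_smul]
      rw [this, ← hLpre, Set.inter_comm, Set.inter_self, hLcard] at hcard
      omega
    · have hem : f ⁻¹' {1} ∩ L = ∅ := by
        ext p
        simp only [Set.mem_inter_iff, Set.mem_preimage, Set.mem_singleton_iff,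
          Set.mem_empty_iff_false, iff_false, not_and]
        intro hp1 hp2
        rw [hLpre] at hp2
        have hp2' : g p = 1 := hp2
        rw [hfg] at hp1
        simp only [LinearMap.smul_apply, smul_eq_mul, hp2'] at hp1
        exact h1 (by simpa using hp1)
      rw [hem, Set.ncard_empty] at hcard
      omega
  -- Part 1
  have part1 : {M : Set K | IsLine F M ∧ (0 : K) ∉ M ∧ (M ∩ L).ncard = 1}
      = (fun f : Module.Dual F K => f ⁻¹' {1}) '' {f : Module.Dual F K | f x ≠ 0} := by
    ext M
    simp only [Set.mem_setOf_eq, Set.mem_image]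
    constructor
    · rintro ⟨hM, hM0, hMcard⟩
      obtain ⟨f, hf0, hMeq⟩ := line_functional hdim hM hM0
      refine ⟨f, ?_, hMeq.symm⟩
      intro hfx
      exact hvert f hf0 hfx (by rw [← hMeq]; exact hMcard)
    · rintro ⟨f, hfx, rfl⟩
      have hf0 : f ≠ 0 := by
        intro hc
        rw [hc] at hfx
        simp at hfx
      obtain ⟨x', z', hx'ne, hfx', hfz'⟩ := exists_xz hf0 hdim
      refine ⟨⟨x', z', hx'ne, (preimage_eq hx'ne hfx' hfz' hdim)⟩, ?_, ?_⟩
      · simp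
      · rw [hLpre]
        exact inter_one hxne hgx hgz hdim hfx
  have hinj : Set.InjOn (fun f : Module.Dual F K => f ⁻¹' {1})
      {f : Module.Dual F K | f x ≠ 0} := by
    intro f hf f' hf' h
    have hf0 : f ≠ 0 := by intro hc; rw [hc] at hf; simp at hf
    have hf'0 : f' ≠ 0 := by intro hc; rw [hc] at hf'; simp at hf'
    exact preimage_inj hf0 hf'0 hdim h
  -- count the functionals with f x ≠ 0
  have hΦ : Function.Injective (fun f : Module.Dual F K => (f x, f z)) := by
    intro f f' h
    exact dual_ext li hdim (congrArg Prod.fst h) (congrArg Prod.snd h)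
  have himg : (fun f : Module.Dual F K => (f x, f z)) '' {f : Module.Dual F K | f x ≠ 0}
      = {p : F × F | p.1 ≠ 0} := by
    ext p
    simp only [Set.mem_image, Set.mem_setOf_eq]
    constructor
    · rintro ⟨f, hfx, rfl⟩
      exact hfx
    · intro hp
      refine ⟨p.1 • b.coord 0 + p.2 • b.coord 1, ?_, ?_⟩
      · simp only [LinearMap.add_apply, LinearMap.smul_apply, smul_eq_mul]
        rw [← hb0]
        simp
        exact hp
      · simp only [LinearMap.add_apply, LinearMap.smul_apply, smul_eq_mul]
        rw [← hb0, ← hb1]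
        simp
  have hcount : ({f : Module.Dual F K | f x ≠ 0}).ncard = 2 ^ s * (2 ^ s - 1) := by
    have h1 : ({f : Module.Dual F K | f x ≠ 0}).ncard = ({p : F × F | p.1 ≠ 0}).ncard := by
      rw [← himg, Set.ncard_image_of_injective _ hΦ]
    have h2 : {p : F × F | p.1 ≠ 0} = ({0}ᶜ ×ˢ Set.univ : Set (F × F)) := by
      ext p
      simp [Set.mem_prod]
    have h3 : (({0}ᶜ ×ˢ Set.univ : Set (F × F))).ncard
        = (({0}ᶜ : Set F)).ncard * (Set.univ : Set F).ncard := by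
      rw [← Nat.card_coe_set_eq, ← Nat.card_coe_set_eq, ← Nat.card_coe_set_eq]
      rw [Nat.card_congr (Equiv.Set.prod _ _), Nat.card_prod]
    have h4 : (({0}ᶜ : Set F)).ncard = 2 ^ s - 1 := by
      rw [Set.compl_eq_univ_diff, Set.ncard_diff (Set.subset_univ _),
        Set.ncard_univ, Nat.card_eq_fintype_card, hq, Set.ncard_singleton]
    rw [h1, h2, h3, h4, Set.ncard_univ, Nat.card_eq_fintype_card, hq, Nat.mul_comm]
  refine ⟨?_, ?_⟩
  · rw [part1, Set.ncard_image_of_injOn hinj, hcount]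
  · ext M
    simp only [Set.mem_setOf_eq, Set.mem_singleton_iff]
    constructor
    · rintro ⟨hM, hM0, hMcard⟩
      obtain ⟨f, hf0, hMeq⟩ := line_functional hdim hM hM0
      rcases eq_or_ne (f x) 0 with hfx | hfx
      · have hfg : f = f z • g :=
          dual_ext li hdim (by simp [hfx, hgx]) (by simp [hgz])
        rcases eq_or_ne (f z) 1 with h1 | h1
        · rw [hMeq, hfg, h1, one_smul, ← hLpre]
        · exfalso
          have hem : M ∩ L = ∅ := by
            ext p
            simp only [Set.mem_inter_iff, Set.mem_empty_iff_false, iff_false, not_and]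
            intro hp1 hp2
            rw [hMeq] at hp1
            have hp1' : f p = 1 := hp1
            rw [hLpre] at hp2
            have hp2' : g p = 1 := hp2
            rw [hfg] at hp1'
            simp only [LinearMap.smul_apply, smul_eq_mul, hp2', mul_one] at hp1'
            exact h1 hp1'
          rw [hem, Set.ncard_empty] at hMcard
          omega
      · exfalso
        have h1 : (M ∩ L).ncard = 1 := by
          rw [hMeq, hLpre]
          exact inter_one hxne hgx hgz hdim hfx
        omega
    · rintro rfl
      exact ⟨⟨x, z, hxne, hLeq⟩, h0, by rw [Set.inter_self, hLcard]⟩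

end Paper
end
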